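/- arXiv:2108.04133 — 3 statements merged into one kernel-verified Lean document; each statement's English description precedes it below -/
import Mathlib

section
/- Let M and N be n×n complex matrices and let p ∈ ℂ[X] be the polynomial p(X) = det(M − X·N), the determinant of the matrix with polynomial entries M − X·N. Then p(0) = det(M) and the degree of p is at most rank(N). In particular, if M is invertible, the pencil M x = ω N x has at most rank(N) finite eigenvalues counted with multiplicity. -/
/-!
Factor `N = A * B` through its column space, with `A : n × r`, `B : r × n` and `r = rank N`.
By the Schur complement, `det (M - X • A * B)` is the determinant of the block matrix
`[[1, B], [X • A, M]]`, whose first `r` columns have entries of degree at most one and whose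
remaining columns are constant; expanding the determinant as a sum over permutations bounds
its degree by `r`.
-/

open Matrix Polynomial

theorem Matrix.exists_rank_factorization {K m n : Type*} [Field K] [Fintype m] [Fintype n]
    [DecidableEq n] (N : Matrix m n K) :
    ∃ (A : Matrix m (Fin N.rank) K) (B : Matrix (Fin N.rank) n K), A * B = N := by
  let b : Module.Basis (Fin N.rank) K (LinearMap.range N.mulVecLin) :=
    Module.finBasisOfFinrankEq _ _ rfl
  refine ⟨LinearMap.toMatrix b (Pi.basisFun K m) (LinearMap.range N.mulVecLin).subtype,
    LinearMap.toMatrix (Pi.basisFun K n) b N.mulVecLin.rangeRestrict, ?_⟩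
  rw [← LinearMap.toMatrix_comp, LinearMap.rangeRestrict, LinearMap.subtype_comp_codRestrict,
    ← Matrix.toLin'_apply', ← Matrix.toLin_eq_toLin', LinearMap.toMatrix_toLin]

theorem Matrix.natDegree_det_le_sum_of_natDegree_le {R n : Type*} [CommRing R] [Fintype n]
    [DecidableEq n] (P : Matrix n n R[X]) (d : n → ℕ) (h : ∀ i j, (P i j).natDegree ≤ d j) :
    P.det.natDegree ≤ ∑ j, d j := by
  rw [det_apply]
  refine natDegree_sum_le_of_forall_le _ _ fun σ _ => ?_
  calc (Equiv.Perm.sign σ • ∏ i, P (σ i) i).natDegree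
      ≤ (∏ i, P (σ i) i).natDegree := by
        rw [Units.smul_def]; exact natDegree_smul_le _ _
    _ ≤ ∑ i, (P (σ i) i).natDegree := natDegree_prod_le _ _
    _ ≤ ∑ i, d i := Finset.sum_le_sum fun i _ => h (σ i) i

theorem Matrix.natDegree_det_sub_X_smul_mul_le {R n r : Type*} [CommRing R] [Fintype n]
    [DecidableEq n] [Fintype r] [DecidableEq r] (M : Matrix n n R) (A : Matrix n r R)
    (B : Matrix r n R) :
    (M.map C - (X : R[X]) • (A * B).map C).det.natDegree ≤ Fintype.card r := by
  have hblock : (M.map C - (X : R[X]) • (A * B).map C).det =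
      (fromBlocks 1 (B.map C) ((X : R[X]) • A.map C) (M.map C)).det := by
    rw [det_fromBlocks_one₁₁, smul_mul, ← Matrix.map_mul]
  rw [hblock]
  refine (natDegree_det_le_sum_of_natDegree_le _ (Sum.elim (fun _ => 1) (fun _ => 0)) ?_).trans
    (by simp)
  rintro (i | i) (j | j)
  · by_cases h : i = j <;> simp [h]
  · simp
  · simpa using natDegree_C_mul_le (A i j) X |>.trans natDegree_X_le
  · simp

/-- For square complex matrices `M`, `N`, the polynomial `p(X) = det(M − X·N)` satisfies
`p(0) = det M` and `deg p ≤ rank N`; hence if `M` is invertible the pencil `M x = ω N x`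
has at most `rank N` finite eigenvalues counted with multiplicity. -/
theorem pencil_det_eval_zero_and_degree_le_rank
    (n : ℕ) (M N : Matrix (Fin n) (Fin n) ℂ) :
    ((M.map (Polynomial.C) - (Polynomial.X : Polynomial ℂ) • N.map (Polynomial.C)).det).eval 0 = M.det ∧
      ((M.map (Polynomial.C) - (Polynomial.X : Polynomial ℂ) • N.map (Polynomial.C)).det).natDegree ≤ N.rank := by
  constructor
  · rw [← coe_evalRingHom, RingHom.map_det]
    congr 1
    ext i j
    simp
  · obtain ⟨A, B, hAB⟩ := N.exists_rank_factorization
    simpa [hAB] using natDegree_det_sub_X_smul_mul_le M A B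
end

section
/- Let n₁, n₂ be natural numbers, let M be an invertible (n₁+n₂)×(n₁+n₂) complex matrix, let D be an n₁×n₂ complex matrix, and let N = [[0, D],[0, 0]]. Then: (i) the polynomial p(X) = det(M − X·N) satisfies p(0) = det(M) ≠ 0 and deg(p) ≤ rank(D), so the finite eigenvalues of the pencil M x = ω N x, counted with multiplicity, number at most rank(D), and ω = 0 is never a finite eigenvalue; (ii) the kernel of N, which is the eigenspace of the reversed pencil N x = γ M x for γ = 0 (corresponding to ω = ∞), has dimension n₁ + (n₂ − rank(D)) = n₁ + dim ker(D). -/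
open Matrix Polynomial

set_option maxHeartbeats 1000000 in
lemma natDegree_det_one_sub_X_smul {r : ℕ} (S : Matrix (Fin r) (Fin r) ℂ) :
    ((1 - (X : Polynomial ℂ) • S.map C).det).natDegree ≤ r := by
  have h1 : ∀ i j : Fin r, ((1 - (X : Polynomial ℂ) • S.map C) i j).natDegree ≤ 1 := by
    intro i j
    simp only [Matrix.sub_apply, Matrix.smul_apply, Matrix.map_apply, smul_eq_mul,
      Matrix.one_apply]
    refine (Polynomial.natDegree_sub_le _ _).trans (max_le ?_ ?_)
    · split <;> simp
    · exact Polynomial.natDegree_mul_le.trans (by simp)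
  rw [Matrix.det_apply']
  refine Polynomial.natDegree_sum_le_of_forall_le _ _ (fun σ _ => ?_)
  refine Polynomial.natDegree_mul_le.trans ?_
  rw [Polynomial.natDegree_intCast, zero_add]
  refine (Polynomial.natDegree_prod_le _ _).trans ?_
  calc ∑ i : Fin r, ((1 - (X : Polynomial ℂ) • S.map C) (σ i) i).natDegree
      ≤ ∑ _i : Fin r, 1 := Finset.sum_le_sum (fun i _ => h1 _ _)
    _ = r := by simp

/-- For the pencil `M x = ω N x` with `M` invertible and `N = [[0, D],[0, 0]]`:
the polynomial `p(X) = det(M − X·N)` satisfies `p(0) = det M ≠ 0` (so `ω = 0` is never a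
finite eigenvalue) and `deg p ≤ rank D` (so there are at most `rank D` finite eigenvalues
counted with multiplicity); moreover the kernel of `N` — the eigenspace of the reversed
pencil `N x = γ M x` for `γ = 0`, corresponding to `ω = ∞` — has dimension
`n₁ + (n₂ − rank D) = n₁ + dim ker D`. -/
theorem pencil_with_singular_rhs
    (n₁ n₂ : ℕ) (M : Matrix (Fin n₁ ⊕ Fin n₂) (Fin n₁ ⊕ Fin n₂) ℂ)
    (hM : IsUnit M.det) (D : Matrix (Fin n₁) (Fin n₂) ℂ) :
    let N : Matrix (Fin n₁ ⊕ Fin n₂) (Fin n₁ ⊕ Fin n₂) ℂ := Matrix.fromBlocks 0 D 0 0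
    let p : Polynomial ℂ :=
      (M.map (Polynomial.C) - (Polynomial.X : Polynomial ℂ) • N.map (Polynomial.C)).det
    p.eval 0 = M.det ∧ p.eval 0 ≠ 0 ∧ p.natDegree ≤ D.rank ∧
      Module.finrank ℂ (LinearMap.ker N.mulVecLin) = n₁ + (n₂ - D.rank) ∧
      n₂ - D.rank = Module.finrank ℂ (LinearMap.ker D.mulVecLin) := by
  intro N p
  -- rank-nullity for D
  have hrn : D.rank + Module.finrank ℂ (LinearMap.ker D.mulVecLin) = n₂ := by
    have h := LinearMap.finrank_range_add_finrank_ker D.mulVecLin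
    rwa [Module.finrank_fin_fun] at h
  have hker_D : n₂ - D.rank = Module.finrank ℂ (LinearMap.ker D.mulVecLin) := by omega
  -- eval at 0
  have heval : p.eval 0 = M.det := by
    show Polynomial.eval 0 ((M.map C - (X : Polynomial ℂ) • N.map C).det) = M.det
    have := (Polynomial.evalRingHom (0 : ℂ)).map_det (M.map C - (X : Polynomial ℂ) • N.map C)
    rw [coe_evalRingHom] at this
    rw [this]
    congr 1
    ext i j
    simp [Matrix.map_apply, Matrix.sub_apply, Matrix.smul_apply, smul_eq_mul]
  refine ⟨heval, by rw [heval]; exact hM.ne_zero, ?_, ?_, hker_D⟩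
  · -- degree bound via rank factorization
    set r := D.rank with hr
    set V := LinearMap.range D.mulVecLin with hV
    have hVr : Module.finrank ℂ V = r := rfl
    let b : Module.Basis (Fin r) ℂ V := Module.finBasisOfFinrankEq ℂ V hVr
    let f : (Fin n₂ → ℂ) →ₗ[ℂ] (Fin r → ℂ) :=
      (b.equivFun : V →ₗ[ℂ] (Fin r → ℂ)) ∘ₗ D.mulVecLin.rangeRestrict
    let g : (Fin r → ℂ) →ₗ[ℂ] (Fin n₁ → ℂ) :=
      V.subtype ∘ₗ (b.equivFun.symm : (Fin r → ℂ) →ₗ[ℂ] V)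
    have hgf : g ∘ₗ f = D.mulVecLin := by
      apply LinearMap.ext; intro x
      show V.subtype (b.equivFun.symm (b.equivFun (D.mulVecLin.rangeRestrict x))) = _
      rw [LinearEquiv.symm_apply_apply]
      rfl
    let E : Matrix (Fin n₁) (Fin r) ℂ := LinearMap.toMatrix' g
    let F : Matrix (Fin r) (Fin n₂) ℂ := LinearMap.toMatrix' f
    have hEF : E * F = D := by
      have h1 : E * F = LinearMap.toMatrix' (g ∘ₗ f) := (LinearMap.toMatrix'_comp g f).symm
      rw [h1, hgf]
      exact LinearMap.toMatrix'.apply_symm_apply D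
    -- N = P * Q
    let P : Matrix (Fin n₁ ⊕ Fin n₂) (Fin r) ℂ := Matrix.fromRows E 0
    let Q : Matrix (Fin r) (Fin n₁ ⊕ Fin n₂) ℂ := Matrix.fromCols 0 F
    have hPQ : P * Q = N := by
      show Matrix.fromRows E 0 * Matrix.fromCols 0 F = Matrix.fromBlocks 0 D 0 0
      rw [Matrix.fromRows_mul_fromCols]
      simp [hEF]
    -- work over polynomials
    have hMinv : (M.map C) * ((M⁻¹).map C) = (1 : Matrix _ _ (Polynomial ℂ)) := by
      rw [← Matrix.map_mul, Matrix.mul_nonsing_inv M hM, Matrix.map_one C C.map_zero C.map_one]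
    set S : Matrix (Fin r) (Fin r) ℂ := Q * (M⁻¹ * P) with hS
    have hfactor : M.map C - (X : Polynomial ℂ) • N.map C
        = (M.map C) * (1 - (((M⁻¹).map C) * ((X : Polynomial ℂ) • P.map C)) * Q.map C) := by
      rw [Matrix.mul_sub, mul_one, ← Matrix.mul_assoc, ← Matrix.mul_assoc, hMinv,
        Matrix.one_mul, Matrix.smul_mul, ← Matrix.map_mul, hPQ]
    have hQsmul : Q.map C * (((M⁻¹).map C) * ((X : Polynomial ℂ) • P.map C))
        = (X : Polynomial ℂ) • S.map C := by
      rw [Matrix.mul_smul, Matrix.mul_smul, ← Matrix.map_mul, ← Matrix.map_mul]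
    have hp : p = (M.map C).det
        * (1 - (X : Polynomial ℂ) • S.map C).det := by
      show (M.map C - (X : Polynomial ℂ) • N.map C).det = _
      rw [hfactor, Matrix.det_mul, Matrix.det_one_sub_mul_comm, hQsmul]
    rw [hp]
    refine Polynomial.natDegree_mul_le.trans ?_
    have hdet : (M.map C).det = C M.det := ((C : ℂ →+* Polynomial ℂ).map_det M).symm
    rw [hdet, Polynomial.natDegree_C, zero_add]
    exact natDegree_det_one_sub_X_smul S
  · -- kernel dimension
    have hmem : ∀ x : (Fin n₁ ⊕ Fin n₂) → ℂ,
        N.mulVecLin x = 0 ↔ D.mulVecLin (x ∘ Sum.inr) = 0 := by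
      intro x
      have hx : x = Sum.elim (x ∘ Sum.inl) (x ∘ Sum.inr) := by
        funext i; cases i <;> rfl
      rw [Matrix.mulVecLin_apply, Matrix.mulVecLin_apply]
      constructor
      · intro h
        funext i
        have := congrFun h (Sum.inl i)
        rw [hx, Matrix.fromBlocks_mulVec] at this
        simpa using this
      · intro h
        funext i
        rw [hx, Matrix.fromBlocks_mulVec]
        cases i with
        | inl i => simpa using congrFun h i
        | inr i => simp
    let e : (LinearMap.ker N.mulVecLin) ≃ₗ[ℂ]
        (Fin n₁ → ℂ) × (LinearMap.ker D.mulVecLin) :=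
      { toFun := fun x => (fun i => x.1 (Sum.inl i),
          ⟨x.1 ∘ Sum.inr, (hmem x.1).mp x.2⟩)
        map_add' := fun x y => rfl
        map_smul' := fun c x => rfl
        invFun := fun y => ⟨Sum.elim y.1 y.2.1, by
          rw [LinearMap.mem_ker, hmem]
          exact y.2.2⟩
        left_inv := fun x => by
          ext i; cases i <;> rfl
        right_inv := fun y => by
          ext i <;> rfl }
    rw [e.finrank_eq, Module.finrank_prod, Module.finrank_fin_fun, hker_D]
end

section
/- Let X be a nonzero complex Banach space, let T : X → X be a compact bounded linear operator, and let (Tₙ) be a sequence of bounded linear operators on X with ‖Tₙ − T‖ → 0. Then every nonzero point of the spectrum of T is attained in the limit by the discrete spectra: for every λ in the spectrum of T with λ ≠ 0, there exists a sequence (λₙ) with λₙ in the spectrum of Tₙ for each n and λₙ → λ. In particular no nonzero continuous eigenvalue is missed by the approximating operators. -/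
/-
Newburgh's argument. By the Fredholm alternative the nonzero spectral points of the compact
operator `T` are eigenvalues, and a Riesz-lemma flag spanned by eigenvectors shows that only
finitely many of them have modulus at least `‖λ‖ / 2`; hence arbitrarily small circles around `λ`
miss `σ(T)`. Let `M` bound the resolvent of `T` on such a circle. If `S` is within `1 / (2M)` of
`T` and has no spectrum inside the circle, the second resolvent identity bounds its resolvent by
`2M` on the circle, the maximum modulus principle then bounds `‖(λ - S)⁻¹‖` by `2M`, and a Neumann
series makes `λ - T` invertible: a contradiction. Nearest points of `σ(Tₙ)` to `λ` then converge
to `λ`.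
-/

open Filter Metric Set Topology Submodule Module End

theorem exists_mem_Ioo_disjoint_sphere {α : Type*} [PseudoMetricSpace α] {s : Set α}
    (hs : s.Finite) (x : α) {ε : ℝ} (hε : 0 < ε) :
    ∃ r ∈ Ioo 0 ε, Disjoint (sphere x r) s := by
  obtain ⟨r, hr, hrs⟩ := ((Ioo_infinite hε).sdiff (hs.image (dist · x))).nonempty
  exact ⟨r, hr, disjoint_left.mpr fun z hz hzs => hrs ⟨z, hzs, mem_sphere.mp hz⟩⟩

theorem exists_tendsto_of_forall_eventually_inter_closedBall_nonempty {ι α : Type*}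
    [PseudoMetricSpace α] {l : Filter ι} {s : ι → Set α} (hne : ∀ i, (s i).Nonempty)
    (hs : ∀ i, IsCompact (s i)) {x : α}
    (h : ∀ ε > 0, ∀ᶠ i in l, (s i ∩ closedBall x ε).Nonempty) :
    ∃ y : ι → α, (∀ i, y i ∈ s i) ∧ Tendsto y l (𝓝 x) := by
  choose y hys hy using fun i => (hs i).exists_infDist_eq_dist (hne i) x
  refine ⟨y, hys, Metric.tendsto_nhds.mpr fun ε hε => ?_⟩
  filter_upwards [h (ε / 2) (half_pos hε)] with i ⟨z, hzs, hz⟩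
  calc dist (y i) x = infDist x (s i) := by rw [dist_comm, hy]
    _ ≤ dist x z := infDist_le_dist_of_mem hzs
    _ ≤ ε / 2 := by rwa [dist_comm, ← mem_closedBall]
    _ < ε := half_lt_self hε

theorem exists_mem_norm_eq_one_forall_le_norm_sub {𝕜 E : Type*} [RCLike 𝕜]
    [NormedAddCommGroup E] [NormedSpace 𝕜 E] {F G : Submodule 𝕜 E} (hF : IsClosed (F : Set E))
    (hFG : F < G) {r : ℝ} (hr : r < 1) :
    ∃ e ∈ G, ‖e‖ = 1 ∧ ∀ w ∈ F, r ≤ ‖e - w‖ := by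
  obtain ⟨v, hvG, hvF⟩ := SetLike.exists_of_lt hFG
  have hF' : IsClosed (F.comap G.subtype : Set G) := hF.preimage continuous_subtype_val
  obtain ⟨e, -, he1, hfar⟩ := riesz_lemma_of_lt_one hF' ⟨⟨v, hvG⟩, hvF⟩ hr
  exact ⟨e, e.2, he1, fun w hw => hfar ⟨w, hFG.le hw⟩ hw⟩

namespace IsCompactOperator

variable {𝕜 X : Type*} [RCLike 𝕜] [NormedAddCommGroup X] [NormedSpace 𝕜 X]

theorem not_pairwise_le_norm_sub {Y : Type*} [NormedAddCommGroup Y] [NormedSpace 𝕜 Y]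
    {T : X →L[𝕜] Y} (hT : IsCompactOperator T) {f : ℕ → X} {R : ℝ} (hf : ∀ n, ‖f n‖ ≤ R)
    {c : ℝ} (hc : 0 < c) : ¬ Pairwise fun m n => c ≤ ‖T (f m) - T (f n)‖ := by
  intro hsep
  obtain ⟨K, hK, hTK⟩ := hT.image_closedBall_subset_compact R
  obtain ⟨_, -, φ, hφ, hlim⟩ :=
    hK.tendsto_subseq fun n => hTK ⟨f n, mem_closedBall_zero_iff.mpr (hf n), rfl⟩
  obtain ⟨N, hN⟩ := Metric.cauchySeq_iff'.mp hlim.cauchySeq c hc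
  have hclose : ‖T (f (φ (N + 1))) - T (f (φ N))‖ < c := by
    simpa [dist_eq_norm] using hN (N + 1) N.le_succ
  exact hclose.not_ge (hsep (hφ.injective.ne N.succ_ne_self))

variable {T : X →L[𝕜] X}

theorem not_strictMono_of_sub_smul_mem (hT : IsCompactOperator T) {E : ℕ → Submodule 𝕜 X}
    (hE : ∀ n, IsClosed (E n : Set X)) {μ : ℕ → 𝕜} {δ : ℝ} (hδ : 0 < δ) (hμ : ∀ n, δ ≤ ‖μ n‖)
    (hmaps : ∀ n, ∀ v ∈ E (n + 1), T v - μ n • v ∈ E n) : ¬ StrictMono E := by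
  intro hmono
  choose e heE he1 hfar using fun n =>
    exists_mem_norm_eq_one_forall_le_norm_sub (hE n) (hmono n.lt_succ_self) (r := 1 / 2)
      (by norm_num)
  have hTe : ∀ m, T (e m) ∈ E (m + 1) := fun m => by
    simpa using add_mem (hmono.monotone m.le_succ (hmaps m _ (heE m))) (smul_mem _ (μ m) (heE m))
  have hsep : ∀ m n, m < n → δ / 2 ≤ ‖T (e n) - T (e m)‖ := by
    intro m n hmn
    have hμn : μ n ≠ 0 := norm_pos_iff.mp (hδ.trans_le (hμ n))
    set w := (μ n)⁻¹ • (T (e m) - (T (e n) - μ n • e n))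
    have hw : w ∈ E n :=
      smul_mem _ _ (sub_mem (hmono.monotone hmn (hTe m)) (hmaps n _ (heE n)))
    have hdiff : T (e n) - T (e m) = μ n • (e n - w) := by
      rw [smul_sub, smul_inv_smul₀ hμn]
      abel
    calc δ / 2 = δ * (1 / 2) := by ring
      _ ≤ ‖μ n‖ * ‖e n - w‖ := by gcongr; exacts [hμ n, hfar n w hw]
      _ = ‖T (e n) - T (e m)‖ := by rw [hdiff, norm_smul]
  refine hT.not_pairwise_le_norm_sub (fun n => (he1 n).le) (half_pos hδ) fun m n hmn => ?_
  rcases hmn.lt_or_gt with h | h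
  · rw [norm_sub_rev]
    exact hsep m n h
  · exact hsep n m h

theorem finite_setOf_hasEigenvalue_le_norm (hT : IsCompactOperator T) {δ : ℝ} (hδ : 0 < δ) :
    {μ | HasEigenvalue (T : End 𝕜 X) μ ∧ δ ≤ ‖μ‖}.Finite := by
  refine not_infinite.mp fun hinf => ?_
  let μ : ℕ → 𝕜 := fun n => hinf.natEmbedding _ n
  have hμ : ∀ n, HasEigenvalue (T : End 𝕜 X) (μ n) ∧ δ ≤ ‖μ n‖ := fun n =>
    (hinf.natEmbedding _ n).2
  choose x hx using fun n => (hμ n).1.exists_hasEigenvector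
  have hli : LinearIndependent 𝕜 x := eigenvectors_linearIndependent' _ μ
    (Subtype.val_injective.comp (hinf.natEmbedding _).injective) x hx
  let E : ℕ → Submodule 𝕜 X := fun n => span 𝕜 (x '' Iio n)
  have hE : ∀ n, IsClosed (E n : Set X) := fun n =>
    haveI := FiniteDimensional.span_of_finite 𝕜 ((finite_Iio n).image x)
    (E n).closed_of_finiteDimensional
  have hmaps : ∀ n, ∀ v ∈ E (n + 1), T v - μ n • v ∈ E n := by
    intro n v hv
    refine (span_le (p := (E n).comap ((T : End 𝕜 X) - μ n • 1))).mpr ?_ hv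
    rintro _ ⟨j, hj, rfl⟩
    have hTx : T (x j) = μ j • x j := mem_eigenspace_iff.mp (hx j).1
    change T (x j) - μ n • x j ∈ E n
    rw [hTx, ← sub_smul]
    rcases Nat.lt_succ_iff_lt_or_eq.mp hj with hjn | rfl
    · exact smul_mem _ _ (subset_span (mem_image_of_mem x hjn))
    · simp
  refine hT.not_strictMono_of_sub_smul_mem hE hδ (fun n => (hμ n).2) hmaps ?_
  refine strictMono_nat_of_lt_succ fun n => lt_of_le_of_ne (span_mono (image_mono ?_)) ?_
  · exact Iio_subset_Iio n.le_succ
  · intro hEq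
    have hxn : x n ∈ E (n + 1) := subset_span (mem_image_of_mem x n.lt_succ_self)
    exact hli.notMem_span_image (s := Iio n) (by simp) (hEq ▸ hxn)

theorem finite_spectrum_inter_le_norm [CompleteSpace X] (hT : IsCompactOperator T) {δ : ℝ}
    (hδ : 0 < δ) : {μ ∈ spectrum 𝕜 T | δ ≤ ‖μ‖}.Finite := by
  refine (hT.finite_setOf_hasEigenvalue_le_norm hδ).subset fun μ ⟨hμ, hδμ⟩ => ⟨?_, hδμ⟩
  exact (hT.hasEigenvalue_iff_mem_spectrum (norm_pos_iff.mp (hδ.trans_le hδμ))).mpr hμ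

theorem exists_mem_Ioo_disjoint_sphere_spectrum [CompleteSpace X] (hT : IsCompactOperator T)
    {z₀ : 𝕜} (hz₀ : z₀ ≠ 0) {ε : ℝ} (hε : 0 < ε) :
    ∃ r ∈ Ioo 0 ε, Disjoint (sphere z₀ r) (spectrum 𝕜 T) := by
  have hδ : 0 < ‖z₀‖ / 2 := half_pos (norm_pos_iff.mpr hz₀)
  obtain ⟨r, ⟨hr0, hr⟩, hdisj⟩ := exists_mem_Ioo_disjoint_sphere
    (hT.finite_spectrum_inter_le_norm hδ) z₀ (lt_min hε hδ)
  refine ⟨r, ⟨hr0, hr.trans_le (min_le_left _ _)⟩, disjoint_left.mpr fun z hz hzT => ?_⟩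
  have hzr : ‖z - z₀‖ = r := mem_sphere_iff_norm.mp hz
  have hrδ : r < ‖z₀‖ / 2 := hr.trans_le (min_le_right _ _)
  have : ‖z₀‖ ≤ ‖z‖ + ‖z - z₀‖ := by simpa using norm_sub_le z (z - z₀)
  exact hdisj.notMem_of_mem_left hz ⟨hzT, by linarith⟩

end IsCompactOperator

namespace spectrum

variable {A : Type*} [NormedRing A] [NormedAlgebra ℂ A]

theorem norm_resolvent_le_two_mul {a b : A} {z : ℂ} (ha : z ∈ resolventSet ℂ a)
    (hb : z ∈ resolventSet ℂ b) (h : ‖a - b‖ * ‖resolvent b z‖ ≤ 1 / 2) :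
    ‖resolvent a z‖ ≤ 2 * ‖resolvent b z‖ := by
  have hbound : ‖resolvent a z‖ ≤ ‖resolvent b z‖ + ‖resolvent a z‖ * (‖a - b‖ * ‖resolvent b z‖) :=
    calc ‖resolvent a z‖
        = ‖resolvent b z + resolvent a z * (a - b) * resolvent b z‖ := by
          rw [← resolvent_sub_resolvent ha hb, add_sub_cancel]
      _ ≤ ‖resolvent b z‖ + ‖resolvent a z‖ * (‖a - b‖ * ‖resolvent b z‖) := by
          grw [norm_add_le, norm_mul_le, norm_mul_le, mul_assoc]
  nlinarith [norm_nonneg (resolvent a z)]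

theorem mem_resolventSet_of_norm_sub_mul_lt [CompleteSpace A] {a b : A} {z : ℂ}
    (hz : z ∈ resolventSet ℂ b) (h : ‖a - b‖ * ‖resolvent b z‖ < 1) :
    z ∈ resolventSet ℂ a := by
  nontriviality A
  have hlt : ‖b - a‖ < ‖((hz.unit⁻¹ : Aˣ) : A)‖⁻¹ := by
    rwa [norm_sub_rev, ← one_div, lt_div_iff₀ (Units.norm_pos _), ← resolvent_eq hz]
  have := (hz.unit.add (b - a) hlt).isUnit
  rwa [Units.val_add, hz.unit_spec, sub_add_sub_cancel] at this

theorem norm_resolvent_le_of_forall_mem_sphere [CompleteSpace A] {a : A} {z₀ : ℂ} {r C : ℝ}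
    (hr : 0 < r) (hρ : closedBall z₀ r ⊆ resolventSet ℂ a)
    (hC : ∀ z ∈ sphere z₀ r, ‖resolvent a z‖ ≤ C) {z : ℂ} (hz : z ∈ closedBall z₀ r) :
    ‖resolvent a z‖ ≤ C := by
  have hd : DifferentiableOn ℂ (resolvent a) (closedBall z₀ r) := fun w hw =>
    (hasDerivAt_resolvent_const_left (hρ hw)).differentiableAt.differentiableWithinAt
  refine Complex.norm_le_of_forall_mem_frontier_norm_le (U := ball z₀ r) isBounded_ball ?_ ?_ ?_
  · exact (closure_ball z₀ hr.ne' ▸ hd).diffContOnCl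
  · rwa [frontier_ball z₀ hr.ne']
  · rwa [closure_ball z₀ hr.ne']

theorem eventually_nonempty_inter_closedBall [CompleteSpace A] {b : A} {z₀ : ℂ}
    (hz₀ : z₀ ∈ spectrum ℂ b) {r : ℝ} (hr : 0 < r)
    (hsphere : Disjoint (sphere z₀ r) (spectrum ℂ b)) :
    ∀ᶠ a in 𝓝 b, (spectrum ℂ a ∩ closedBall z₀ r).Nonempty := by
  have hρb : sphere z₀ r ⊆ resolventSet ℂ b := fun _ hz =>
    notMem_iff.mp (hsphere.notMem_of_mem_left hz)
  obtain ⟨C, hC⟩ := (isCompact_sphere z₀ r).exists_bound_of_continuousOn fun z hz =>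
    (hasDerivAt_resolvent_const_left (hρb hz)).continuousAt.continuousWithinAt
  set M := max C 1
  have hM : 0 < M := lt_max_of_lt_right one_pos
  filter_upwards [ball_mem_nhds b (inv_pos.mpr (mul_pos two_pos hM))] with a ha
  rw [mem_ball, dist_eq_norm] at ha
  by_contra hempty
  have hρa : closedBall z₀ r ⊆ resolventSet ℂ a := fun z hz =>
    notMem_iff.mp fun hza => hempty ⟨z, hza, hz⟩
  have hsphere_a : ∀ z ∈ sphere z₀ r, ‖resolvent a z‖ ≤ 2 * M := by
    intro z hz
    have hbz : ‖resolvent b z‖ ≤ M := (hC z hz).trans (le_max_left _ _)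
    refine (norm_resolvent_le_two_mul (hρa (sphere_subset_closedBall hz)) (hρb hz) ?_).trans
      (by linarith)
    calc ‖a - b‖ * ‖resolvent b z‖ ≤ (2 * M)⁻¹ * M := by gcongr
      _ = 1 / 2 := by field_simp
  have hcentre :=
    norm_resolvent_le_of_forall_mem_sphere hr hρa hsphere_a (mem_closedBall_self hr.le)
  refine hz₀ (mem_resolventSet_of_norm_sub_mul_lt (hρa (mem_closedBall_self hr.le)) ?_)
  calc ‖b - a‖ * ‖resolvent a z₀‖ ≤ ‖b - a‖ * (2 * M) := by gcongr
    _ < (2 * M)⁻¹ * (2 * M) := by rw [norm_sub_rev]; gcongr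
    _ = 1 := inv_mul_cancel₀ (by positivity)

end spectrum

/-- If bounded operators `Tₙ` on a nonzero complex Banach space converge in operator norm
to a compact operator `T`, then every nonzero point of the spectrum of `T` is the limit of
a sequence of points of the spectra of the `Tₙ`: no nonzero continuous eigenvalue is missed
by the approximating operators. -/
theorem nonzero_spectrum_attained_by_approximations
    {X : Type*} [NormedAddCommGroup X] [NormedSpace ℂ X] [CompleteSpace X] [Nontrivial X]
    (T : X →L[ℂ] X) (hT : IsCompactOperator (T : X → X))
    (Tseq : ℕ → X →L[ℂ] X)
    (hconv : Tendsto (fun n => ‖Tseq n - T‖) atTop (nhds 0)) :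
    ∀ lam ∈ spectrum ℂ T, lam ≠ 0 →
      ∃ lamseq : ℕ → ℂ, (∀ n, lamseq n ∈ spectrum ℂ (Tseq n)) ∧
        Tendsto lamseq atTop (nhds lam) := by
  intro lam hlam hlam0
  have hTseq : Tendsto Tseq atTop (𝓝 T) := tendsto_iff_norm_sub_tendsto_zero.mpr hconv
  refine exists_tendsto_of_forall_eventually_inter_closedBall_nonempty
    (fun n => spectrum.nonempty (Tseq n)) (fun n => spectrum.isCompact (Tseq n)) fun ε hε => ?_
  obtain ⟨r, hr, hsphere⟩ := hT.exists_mem_Ioo_disjoint_sphere_spectrum hlam0 hε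
  filter_upwards [hTseq.eventually
    (spectrum.eventually_nonempty_inter_closedBall hlam hr.1 hsphere)] with n ⟨z, hz, hzr⟩
  exact ⟨z, hz, closedBall_subset_closedBall hr.2.le hzr⟩
end
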